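/- arXiv:2601.11081 — 5 statements merged into one kernel-verified Lean document; each statement's English description precedes it below -/
import Mathlib

section
/- Define r(t) = r₀·exp(-(erf⁻¹(t·√(2/(r₀²π))))²) for t ∈ [0, r₀√(π/2)), where r₀ > 0 and erf⁻¹ is the inverse error function. Then r satisfies r''(t) = -1/r(t) on this interval, with r(0) = r₀ and r'(0) = 0. -/
/-- The error function erf(x) = (2/√π) ∫₀ˣ e^{-s²} ds. -/
noncomputable def errorFun (x : ℝ) : ℝ :=
  (2 / Real.sqrt Real.pi) * ∫ s in (0:ℝ)..x, Real.exp (-s ^ 2)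

/-- The inverse error function on (-1,1). -/
noncomputable def errorFunInv : ℝ → ℝ := Function.invFun errorFun

open Real MeasureTheory intervalIntegral Set Filter

lemma gcont : Continuous (fun s : ℝ => Real.exp (-s ^ 2)) := by continuity

lemma errorFun_hasDerivAt (x : ℝ) :
    HasDerivAt errorFun ((2 / Real.sqrt Real.pi) * Real.exp (-x ^ 2)) x := by
  have h := (integral_hasDerivAt_right ((gcont.intervalIntegrable 0 x))
    gcont.aestronglyMeasurable.stronglyMeasurableAtFilter gcont.continuousAt)
  exact h.const_mul _

lemma errorFun_strictMono : StrictMono errorFun :=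
  strictMono_of_deriv_pos (fun x => by
    rw [(errorFun_hasDerivAt x).deriv]
    have := Real.sqrt_pos.2 Real.pi_pos
    positivity)

lemma errorFun_zero : errorFun 0 = 0 := by simp [errorFun]

lemma errorFun_odd (x : ℝ) : errorFun (-x) = -errorFun x := by
  have h := intervalIntegral.integral_comp_neg (a := (0:ℝ)) (b := -x) (fun s => Real.exp (-s ^ 2))
  simp only [neg_neg, neg_zero] at h
  have h2 : (fun s : ℝ => Real.exp (-(-s) ^ 2)) = fun s : ℝ => Real.exp (-s ^ 2) := by
    funext s; ring_nf
  rw [h2] at h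
  rw [errorFun, errorFun, h, intervalIntegral.integral_symm]
  ring

lemma errorFun_tendsto : Tendsto errorFun atTop (nhds 1) := by
  have hint : IntegrableOn (fun s : ℝ => Real.exp (-s ^ 2)) (Ioi 0) := by
    have := integrableOn_Ioi_exp_neg_mul_sq_iff (b := 1) |>.2 one_pos
    simpa using this
  have h := intervalIntegral_tendsto_integral_Ioi 0 hint tendsto_id
  have h2 : (∫ s in Ioi (0:ℝ), Real.exp (-s ^ 2)) = Real.sqrt Real.pi / 2 := by
    have := integral_gaussian_Ioi 1
    simpa using this
  rw [h2] at h
  have hπ : Real.sqrt Real.pi ≠ 0 := ne_of_gt (Real.sqrt_pos.2 Real.pi_pos)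
  have key : (2 / Real.sqrt Real.pi) * (Real.sqrt Real.pi / 2) = 1 := by field_simp
  have := h.const_mul (2 / Real.sqrt Real.pi)
  rw [key] at this
  exact this

lemma errorFun_lt_one (x : ℝ) : errorFun x < 1 := by
  have h1 : errorFun x < errorFun (x + 1) := errorFun_strictMono (by linarith)
  have h2 : errorFun (x + 1) ≤ 1 := by
    refine ge_of_tendsto errorFun_tendsto ?_
    filter_upwards [eventually_ge_atTop (x + 1)] with y hy
    exact errorFun_strictMono.monotone hy
  linarith

lemma neg_one_lt_errorFun (x : ℝ) : -1 < errorFun x := by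
  have := errorFun_lt_one (-x)
  rw [errorFun_odd] at this
  linarith

lemma errorFun_surjOn : ∀ y ∈ Ioo (-1:ℝ) 1, ∃ x, errorFun x = y := by
  have hpos : ∀ y ∈ Ico (0:ℝ) 1, ∃ x, errorFun x = y := by
    intro y hy
    obtain ⟨x₀, hx₀⟩ := (errorFun_tendsto.eventually (eventually_gt_nhds hy.2)).exists
    have hcont : ContinuousOn errorFun (Icc 0 x₀) :=
      fun x _ => ((errorFun_hasDerivAt x).continuousAt).continuousWithinAt
    have h0 : errorFun 0 ≤ y := by rw [errorFun_zero]; exact hy.1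
    have hle : (0:ℝ) ≤ x₀ := by
      by_contra h
      have := errorFun_strictMono (show x₀ < 0 by linarith)
      rw [errorFun_zero] at this
      linarith [hy.1]
    obtain ⟨x, _, hx⟩ := intermediate_value_Icc hle hcont ⟨h0, hx₀.le⟩
    exact ⟨x, hx⟩
  intro y hy
  rcases le_or_gt 0 y with h | h
  · exact hpos y ⟨h, hy.2⟩
  · obtain ⟨x, hx⟩ := hpos (-y) ⟨by linarith, by linarith [hy.1]⟩
    exact ⟨-x, by rw [errorFun_odd, hx, neg_neg]⟩

lemma errorFun_inv_eq : ∀ y ∈ Ioo (-1:ℝ) 1, errorFun (errorFunInv y) = y := fun y hy =>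
  Function.invFun_eq (errorFun_surjOn y hy)

lemma errorFunInv_continuousAt {y : ℝ} (hy : y ∈ Ioo (-1:ℝ) 1) :
    ContinuousAt errorFunInv y := by
  set x₀ := errorFunInv y with hx₀
  have hEx₀ : errorFun x₀ = y := errorFun_inv_eq y hy
  rw [ContinuousAt, tendsto_order]
  constructor
  · intro a ha
    have hS : Ioo (errorFun a) (errorFun (x₀ + 1)) ∈ nhds y := by
      apply Ioo_mem_nhds
      · rw [← hEx₀]; exact errorFun_strictMono ha
      · rw [← hEx₀]; exact errorFun_strictMono (by linarith)
    filter_upwards [hS] with z hz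
    have hz1 : z ∈ Ioo (-1:ℝ) 1 := ⟨lt_trans (neg_one_lt_errorFun a) hz.1,
      lt_trans hz.2 (errorFun_lt_one _)⟩
    have : errorFun a < errorFun (errorFunInv z) := by rw [errorFun_inv_eq z hz1]; exact hz.1
    exact errorFun_strictMono.lt_iff_lt.1 this
  · intro b hb
    have hS : Ioo (errorFun (x₀ - 1)) (errorFun b) ∈ nhds y := by
      apply Ioo_mem_nhds
      · rw [← hEx₀]; exact errorFun_strictMono (by linarith)
      · rw [← hEx₀]; exact errorFun_strictMono hb
    filter_upwards [hS] with z hz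
    have hz1 : z ∈ Ioo (-1:ℝ) 1 := ⟨lt_trans (neg_one_lt_errorFun _) hz.1,
      lt_trans hz.2 (errorFun_lt_one _)⟩
    have : errorFun (errorFunInv z) < errorFun b := by rw [errorFun_inv_eq z hz1]; exact hz.2
    exact errorFun_strictMono.lt_iff_lt.1 this

lemma errorFunInv_hasDerivAt {y : ℝ} (hy : y ∈ Ioo (-1:ℝ) 1) :
    HasDerivAt errorFunInv
      ((Real.sqrt Real.pi / 2) * Real.exp ((errorFunInv y) ^ 2)) y := by
  have hmem : Ioo (-1:ℝ) 1 ∈ nhds y := Ioo_mem_nhds hy.1 hy.2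
  have h := HasDerivAt.of_local_left_inverse (errorFunInv_continuousAt hy)
    (errorFun_hasDerivAt (errorFunInv y))
    (by
      have := Real.sqrt_pos.2 Real.pi_pos
      positivity)
    (by filter_upwards [hmem] with z hz using errorFun_inv_eq z hz)
  refine h.congr_deriv ?_
  symm
  have hπ : Real.sqrt Real.pi ≠ 0 := ne_of_gt (Real.sqrt_pos.2 Real.pi_pos)
  rw [mul_inv, Real.exp_neg]
  field_simp

lemma errorFunInv_zero : errorFunInv 0 = 0 := by
  have : errorFun (errorFunInv 0) = errorFun 0 := by
    rw [errorFun_zero]; exact errorFun_inv_eq 0 ⟨by norm_num, by norm_num⟩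
  exact errorFun_strictMono.injective this

/-- r(t) = r₀·exp(-(erf⁻¹(t·√(2/(r₀²π))))²) solves r'' = -1/r on
[0, r₀√(π/2)) with r(0) = r₀ and r'(0) = 0. -/

theorem hmcf_circle_analytic_solution_zero_velocity
    (r₀ : ℝ) (hr₀ : 0 < r₀)
    (r : ℝ → ℝ)
    (hr : r = fun t =>
      r₀ * Real.exp (-(errorFunInv (t * Real.sqrt (2 / (r₀ ^ 2 * Real.pi)))) ^ 2)) :
    (∀ t ∈ Set.Ico 0 (r₀ * Real.sqrt (Real.pi / 2)),
        deriv (deriv r) t = -1 / r t) ∧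
    r 0 = r₀ ∧ deriv r 0 = 0 := by
  subst hr
  have hπ := Real.pi_pos
  have hπs : (0:ℝ) < Real.sqrt Real.pi := Real.sqrt_pos.2 hπ
  set c : ℝ := Real.sqrt (2 / (r₀ ^ 2 * Real.pi)) with hcdef
  have hcpos : 0 < c := Real.sqrt_pos.2 (by positivity)
  have hc2 : c ^ 2 = 2 / (r₀ ^ 2 * Real.pi) := Real.sq_sqrt (by positivity)
  set u : ℝ → ℝ := fun t => errorFunInv (t * c) with hudef
  -- derivative of u
  have hu : ∀ t : ℝ, t * c ∈ Ioo (-1:ℝ) 1 →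
      HasDerivAt u ((Real.sqrt Real.pi / 2) * Real.exp (u t ^ 2) * c) t := by
    intro t ht
    have h1 : HasDerivAt (fun t : ℝ => t * c) c t := by
      simpa using (hasDerivAt_id t).mul_const c
    exact (errorFunInv_hasDerivAt ht).comp t h1
  -- derivative of r
  set K : ℝ := r₀ * Real.sqrt Real.pi * c with hKdef
  have hrd : ∀ t : ℝ, t * c ∈ Ioo (-1:ℝ) 1 →
      HasDerivAt (fun t => r₀ * Real.exp (-(u t) ^ 2)) (-(K * u t)) t := by
    intro t ht
    have h2 := (((hu t ht).pow 2).neg.exp.const_mul r₀)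
    refine h2.congr_deriv ?_
    symm
    have he : Real.exp (-(u t) ^ 2) * Real.exp (u t ^ 2) = 1 := by
      rw [← Real.exp_add, neg_add_cancel, Real.exp_zero]
    calc -(K * u t) = (Real.exp (-(u t) ^ 2) * Real.exp (u t ^ 2)) * (-(K * u t)) := by
          rw [he]; ring
      _ = r₀ * (Real.exp (-u t ^ 2) * -(↑2 * u t ^ (2 - 1) * (Real.sqrt Real.pi / 2 * Real.exp (u t ^ 2) * c))) := by
          rw [hKdef]; push_cast; ring_nf
  -- the open set
  have hopen : IsOpen {t : ℝ | t * c ∈ Ioo (-1:ℝ) 1} :=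
    (isOpen_Ioo).preimage (continuous_id.mul continuous_const)
  have hderiv_eq : ∀ t : ℝ, t * c ∈ Ioo (-1:ℝ) 1 →
      deriv (fun t => r₀ * Real.exp (-(u t) ^ 2)) t = -(K * u t) := fun t ht => (hrd t ht).deriv
  -- membership
  have hmem : ∀ t ∈ Set.Ico (0:ℝ) (r₀ * Real.sqrt (Real.pi / 2)), t * c ∈ Ioo (-1:ℝ) 1 := by
    intro t ht
    have hT : r₀ * Real.sqrt (Real.pi / 2) * c = 1 := by
      rw [hcdef, mul_assoc, ← Real.sqrt_mul (by positivity)]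
      have : Real.pi / 2 * (2 / (r₀ ^ 2 * Real.pi)) = (1 / r₀) ^ 2 := by
        field_simp
      rw [this, Real.sqrt_sq (by positivity)]
      field_simp
    constructor
    · have : 0 ≤ t * c := mul_nonneg ht.1 hcpos.le
      linarith
    · calc t * c < r₀ * Real.sqrt (Real.pi / 2) * c := by
            exact mul_lt_mul_of_pos_right ht.2 hcpos
        _ = 1 := hT
    -- done
  refine ⟨?_, ?_, ?_⟩
  · intro t ht
    have htm := hmem t ht
    -- deriv (deriv r) t
    have heq : deriv (fun t => r₀ * Real.exp (-(u t) ^ 2)) =ᶠ[nhds t] fun s => -(K * u s) := by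
      filter_upwards [hopen.mem_nhds htm] with s hs using hderiv_eq s hs
    rw [heq.deriv_eq]
    have h3 : HasDerivAt (fun s => -(K * u s))
        (-(K * ((Real.sqrt Real.pi / 2) * Real.exp (u t ^ 2) * c))) t :=
      ((hu t htm).const_mul K).neg
    rw [h3.deriv]
    have hexp : Real.exp (-(u t) ^ 2) ≠ 0 := Real.exp_ne_zero _
    have hrpos : r₀ * Real.exp (-(u t) ^ 2) ≠ 0 := by positivity
    have hKc : K * ((Real.sqrt Real.pi / 2) * Real.exp (u t ^ 2) * c)
        = Real.exp (u t ^ 2) / r₀ := by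
      rw [hKdef]
      have : r₀ * Real.sqrt Real.pi * c * (Real.sqrt Real.pi / 2 * Real.exp (u t ^ 2) * c)
          = r₀ * (Real.sqrt Real.pi * Real.sqrt Real.pi) * c ^ 2 * Real.exp (u t ^ 2) / 2 := by
        ring
      rw [this, Real.mul_self_sqrt hπ.le, hc2]
      field_simp
    rw [hKc]
    have he : Real.exp (-(u t) ^ 2) * Real.exp (u t ^ 2) = 1 := by
      rw [← Real.exp_add, neg_add_cancel, Real.exp_zero]
    show -(Real.exp (u t ^ 2) / r₀) = -1 / (r₀ * Real.exp (-(u t) ^ 2))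
    rw [neg_div, neg_inj, div_eq_div_iff (by positivity) (by positivity)]
    nlinarith [he]
  · simp [hudef, errorFunInv_zero]
  · have h0 : (0:ℝ) * c ∈ Ioo (-1:ℝ) 1 := by
      constructor <;> simp
    rw [hderiv_eq 0 h0]
    simp [hudef, errorFunInv_zero]
end

section
/- Let r : [0,T) → ℝ be a positive C² solution of r'' = -1/r with r(0) = r₀ > 0 and r'(0) = 0, and suppose r(t) → 0 as t → T⁻. Then T ≤ r₀·√(π/2). -/
/-- If a positive C² solution of r'' = -1/r with r(0)=r₀>0,
r'(0)=0 satisfies r(t) → 0 as t → T⁻, then T ≤ r₀·√(π/2). -/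
theorem hmcf_circle_collapse_time_bound
    (T r₀ : ℝ) (hT : 0 < T) (r r' : ℝ → ℝ)
    (hr₀ : 0 < r₀)
    (hpos : ∀ t ∈ Set.Ico (0:ℝ) T, 0 < r t)
    (hderiv : ∀ t ∈ Set.Ico (0:ℝ) T, HasDerivAt r (r' t) t)
    (hode : ∀ t ∈ Set.Ico (0:ℝ) T, HasDerivAt r' (-1 / r t) t)
    (hinit : r 0 = r₀) (hvel : r' 0 = 0)
    (hcollapse : Filter.Tendsto r (nhdsWithin T (Set.Iio T)) (nhds 0)) :
    T ≤ r₀ * Real.sqrt (Real.pi / 2) := by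
  by_contra hcon
  push_neg at hcon
  set B := r₀ * Real.sqrt (Real.pi / 2) with hBdef
  have hBnn : 0 ≤ B := mul_nonneg hr₀.le (Real.sqrt_nonneg _)
  set b := (B + T) / 2 with hbdef
  have hbB : B < b := by simp only [hbdef]; linarith
  have hbT : b < T := by simp only [hbdef]; linarith
  have hb0 : 0 < b := lt_of_le_of_lt hBnn hbB
  have hsub : Set.Icc (0:ℝ) b ⊆ Set.Ico (0:ℝ) T :=
    fun x hx => ⟨hx.1, lt_of_le_of_lt hx.2 hbT⟩
  -- continuity of r and r' on [0, b]
  have hrc : ContinuousOn r (Set.Icc 0 b) :=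
    fun x hx => ((hderiv x (hsub hx)).continuousAt).continuousWithinAt
  have hr'c : ContinuousOn r' (Set.Icc 0 b) :=
    fun x hx => ((hode x (hsub hx)).continuousAt).continuousWithinAt
  have hrne : ∀ x ∈ Set.Icc (0:ℝ) b, r x ≠ 0 := fun x hx => (hpos x (hsub hx)).ne'
  -- r' is strictly decreasing on [0, b]
  have hanti' : StrictAntiOn r' (Set.Icc 0 b) := by
    apply strictAntiOn_of_deriv_neg (convex_Icc 0 b) hr'c
    intro x hx
    rw [interior_Icc] at hx
    have hx' : x ∈ Set.Ico (0:ℝ) T := ⟨hx.1.le, hx.2.trans hbT⟩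
    rw [(hode x hx').deriv]
    exact div_neg_of_neg_of_pos (by norm_num) (hpos x hx')
  have hr'neg : ∀ t ∈ Set.Ioc (0:ℝ) b, r' t < 0 := by
    intro t ht
    have := hanti' ⟨le_refl 0, hb0.le⟩ ⟨ht.1.le, ht.2⟩ ht.1
    rwa [hvel] at this
  have hr'np : ∀ t ∈ Set.Icc (0:ℝ) b, r' t ≤ 0 := by
    intro t ht
    rcases eq_or_lt_of_le ht.1 with h | h
    · rw [← h, hvel]
    · exact (hr'neg t ⟨h, ht.2⟩).le
  -- r is strictly decreasing on [0, b]
  have hranti : StrictAntiOn r (Set.Icc 0 b) := by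
    apply strictAntiOn_of_deriv_neg (convex_Icc 0 b) hrc
    intro x hx
    rw [interior_Icc] at hx
    rw [(hderiv x (hsub ⟨hx.1.le, hx.2.le⟩)).deriv]
    exact hr'neg x ⟨hx.1, hx.2.le⟩
  have hrlt : ∀ t ∈ Set.Ioc (0:ℝ) b, r t < r₀ := by
    intro t ht
    have := hranti ⟨le_refl 0, hb0.le⟩ ⟨ht.1.le, ht.2⟩ ht.1
    rwa [hinit] at this
  -- energy identity
  have hE : ∀ t ∈ Set.Icc (0:ℝ) b,
      (r' t) ^ 2 / 2 + Real.log (r t) = Real.log r₀ := by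
    have key := constant_of_has_deriv_right_zero
      (f := fun t => (r' t) ^ 2 / 2 + Real.log (r t)) (a := 0) (b := b)
      (((hr'c.pow 2).div_const 2).add (hrc.log hrne))
      (by
        intro x hx
        have hx' : x ∈ Set.Ico (0:ℝ) T := ⟨hx.1, hx.2.trans hbT⟩
        have h1 : HasDerivAt (fun t => (r' t) ^ 2 / 2 + Real.log (r t))
            ((2 * r' x ^ 1 * (-1 / r x)) / 2 + r' x / r x) x :=
          (((hode x hx').pow 2).div_const 2).add
            ((hderiv x hx').log (hpos x hx').ne')
        have h2 : (2 * r' x ^ 1 * (-1 / r x)) / 2 + r' x / r x = 0 := by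
          have hne := (hpos x hx').ne'
          field_simp
          ring
        rw [h2] at h1
        exact h1.hasDerivWithinAt)
    intro t ht
    simpa [hvel, hinit] using key t ht
  -- the substitution u = sqrt(log(r₀ / r t))
  set u : ℝ → ℝ := fun t => Real.sqrt (Real.log r₀ - Real.log (r t)) with hudef
  have hlognn : ∀ t ∈ Set.Icc (0:ℝ) b, 0 ≤ Real.log r₀ - Real.log (r t) := by
    intro t ht
    have := hE t ht
    nlinarith [sq_nonneg (r' t)]
  have hu_sq : ∀ t ∈ Set.Icc (0:ℝ) b,
      (u t) ^ 2 = Real.log r₀ - Real.log (r t) := fun t ht =>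
    Real.sq_sqrt (hlognn t ht)
  have hu_nonneg : ∀ t, 0 ≤ u t := fun t => Real.sqrt_nonneg _
  have hr'_eq : ∀ t ∈ Set.Icc (0:ℝ) b, r' t = -(Real.sqrt 2 * u t) := by
    intro t ht
    have hsq : (r' t) ^ 2 = (Real.sqrt 2 * u t) ^ 2 := by
      have h1 := hE t ht
      have h2 := hu_sq t ht
      have h3 : (Real.sqrt 2) ^ 2 = 2 := Real.sq_sqrt (by norm_num)
      nlinarith
    have h1 : 0 ≤ -r' t := neg_nonneg.mpr (hr'np t ht)
    have h2 : 0 ≤ Real.sqrt 2 * u t :=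
      mul_nonneg (Real.sqrt_nonneg _) (hu_nonneg t)
    have : -r' t = Real.sqrt 2 * u t := by
      have := Real.sqrt_sq h1
      rw [show (-r' t) ^ 2 = (Real.sqrt 2 * u t) ^ 2 by rw [neg_pow]; ring_nf; nlinarith,
        Real.sqrt_sq h2] at this
      linarith
    linarith
  have hrepr : ∀ t ∈ Set.Icc (0:ℝ) b, r t = r₀ * Real.exp (-(u t) ^ 2) := by
    intro t ht
    have h1 := hu_sq t ht
    have h2 : Real.log (r t) = Real.log r₀ - (u t) ^ 2 := by linarith
    have h3 : r t = Real.exp (Real.log (r t)) :=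
      (Real.exp_log (hpos t (hsub ht))).symm
    rw [h3, h2, Real.exp_sub, Real.exp_log hr₀, Real.exp_neg, div_eq_mul_inv]
  have hu_pos : ∀ t ∈ Set.Ioc (0:ℝ) b, 0 < u t := by
    intro t ht
    apply Real.sqrt_pos.mpr
    have := Real.log_lt_log (hpos t (hsub ⟨ht.1.le, ht.2⟩)) (hrlt t ht)
    linarith
  -- continuity of u on [0, b]
  have huc : ContinuousOn u (Set.Icc 0 b) :=
    (continuousOn_const.sub (hrc.log hrne)).sqrt
  -- the Gaussian antiderivative
  set H : ℝ → ℝ := fun y => ∫ s in (0:ℝ)..y, Real.exp (-s ^ 2) with hHdef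
  have hexp_cont : Continuous fun s : ℝ => Real.exp (-s ^ 2) := by
    fun_prop
  have hHderiv : ∀ y, HasDerivAt H (Real.exp (-y ^ 2)) y := fun y =>
    (hexp_cont.integral_hasStrictDerivAt 0 y).hasDerivAt
  have hHcont : Continuous H :=
    continuous_iff_continuousAt.mpr fun y => (hHderiv y).continuousAt
  set G : ℝ → ℝ := fun t => Real.sqrt 2 * r₀ * H (u t) with hGdef
  -- derivative of G is 1 on the interior
  have hGderiv : ∀ t ∈ Set.Ioo (0:ℝ) b, HasDerivAt G 1 t := by
    intro t ht
    have ht' : t ∈ Set.Icc (0:ℝ) b := ⟨ht.1.le, ht.2.le⟩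
    have htT : t ∈ Set.Ico (0:ℝ) T := hsub ht'
    have hupos := hu_pos t ⟨ht.1, ht.2.le⟩
    have hrt := hpos t htT
    have hfne : Real.log r₀ - Real.log (r t) ≠ 0 := by
      have := hu_sq t ht'
      nlinarith
    have hfd : HasDerivAt (fun s => Real.log r₀ - Real.log (r s))
        (0 - r' t / r t) t :=
      (hasDerivAt_const t (Real.log r₀)).sub ((hderiv t htT).log hrt.ne')
    have hud : HasDerivAt u
        ((0 - r' t / r t) / (2 * Real.sqrt (Real.log r₀ - Real.log (r t)))) t :=
      hfd.sqrt hfne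
    have hHu : HasDerivAt (fun s => H (u s))
        (Real.exp (-(u t) ^ 2) *
          ((0 - r' t / r t) / (2 * Real.sqrt (Real.log r₀ - Real.log (r t))))) t :=
      (hHderiv (u t)).comp t hud
    have hGd := hHu.const_mul (Real.sqrt 2 * r₀)
    have hval : Real.sqrt 2 * r₀ *
        (Real.exp (-(u t) ^ 2) *
          ((0 - r' t / r t) / (2 * Real.sqrt (Real.log r₀ - Real.log (r t))))) = 1 := by
      have h1 : Real.sqrt (Real.log r₀ - Real.log (r t)) = u t := rfl
      rw [h1, hr'_eq t ht', hrepr t ht']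
      have hexp_pos : 0 < Real.exp (-(u t) ^ 2) := Real.exp_pos _
      have hs2 : (Real.sqrt 2) * (Real.sqrt 2) = 2 := Real.mul_self_sqrt (by norm_num)
      field_simp
      linear_combination (u t) * hs2
    rw [hval] at hGd
    exact hGd
  -- G is continuous on [0, b]
  have hGc : ContinuousOn G (Set.Icc 0 b) :=
    continuousOn_const.mul (hHcont.comp_continuousOn huc)
  -- G t = t on [0, b] by constancy of G t - t
  have hGeq : G b = b := by
    have hφc : ContinuousOn (fun t => G t - t) (Set.Icc 0 b) :=
      hGc.sub continuousOn_id
    have hφd : ∀ x ∈ interior (Set.Icc (0:ℝ) b),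
        HasDerivAt (fun t => G t - t) 0 x := by
      intro x hx
      rw [interior_Icc] at hx
      have := (hGderiv x hx).sub (hasDerivAt_id x)
      simp only [sub_self] at this
      exact this
    have hmono : MonotoneOn (fun t => G t - t) (Set.Icc 0 b) := by
      apply monotoneOn_of_deriv_nonneg (convex_Icc 0 b) hφc
      · intro x hx
        exact (hφd x hx).differentiableAt.differentiableWithinAt
      · intro x hx
        rw [(hφd x hx).deriv]
    have hantiφ : AntitoneOn (fun t => G t - t) (Set.Icc 0 b) := by
      apply antitoneOn_of_deriv_nonpos (convex_Icc 0 b) hφc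
      · intro x hx
        exact (hφd x hx).differentiableAt.differentiableWithinAt
      · intro x hx
        rw [(hφd x hx).deriv]
    have h0m : (0:ℝ) ∈ Set.Icc (0:ℝ) b := ⟨le_refl 0, hb0.le⟩
    have hbm : b ∈ Set.Icc (0:ℝ) b := ⟨hb0.le, le_refl b⟩
    have he : G b - b = G 0 - 0 :=
      le_antisymm (hantiφ h0m hbm hb0.le) (hmono h0m hbm hb0.le)
    have hu0 : u 0 = 0 := by
      simp only [hudef, hinit, sub_self, Real.sqrt_zero]
    have hG0 : G 0 = 0 := by
      simp only [hGdef, hu0, hHdef, intervalIntegral.integral_same, mul_zero]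
    rw [hG0] at he
    linarith
  -- bound H by the full Gaussian integral
  have hHle : ∀ y, 0 ≤ y → H y ≤ Real.sqrt Real.pi / 2 := by
    intro y hy
    have hint : MeasureTheory.IntegrableOn (fun s : ℝ => Real.exp (-s ^ 2))
        (Set.Ioi 0) := by
      have := (integrable_exp_neg_mul_sq (b := 1) one_pos).integrableOn
        (s := Set.Ioi (0:ℝ))
      simpa using this
    have h1 : H y = ∫ s in Set.Ioc 0 y, Real.exp (-s ^ 2) :=
      intervalIntegral.integral_of_le hy
    have h2 : (∫ s in Set.Ioc 0 y, Real.exp (-s ^ 2)) ≤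
        ∫ s in Set.Ioi (0:ℝ), Real.exp (-s ^ 2) := by
      apply MeasureTheory.setIntegral_mono_set hint
      · exact Filter.Eventually.of_forall fun s => (Real.exp_pos _).le
      · exact HasSubset.Subset.eventuallyLE Set.Ioc_subset_Ioi_self
    have h3 : (∫ s in Set.Ioi (0:ℝ), Real.exp (-s ^ 2)) = Real.sqrt Real.pi / 2 := by
      have := integral_gaussian_Ioi 1
      simpa using this
    rw [h1]
    rw [h3] at h2
    exact h2
  -- conclude
  have hfinal : b ≤ B := by
    have h1 : b = Real.sqrt 2 * r₀ * H (u b) := hGeq.symm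
    have h2 : H (u b) ≤ Real.sqrt Real.pi / 2 := hHle (u b) (hu_nonneg b)
    have h3 : Real.sqrt 2 * r₀ * H (u b) ≤ Real.sqrt 2 * r₀ * (Real.sqrt Real.pi / 2) :=
      mul_le_mul_of_nonneg_left h2 (mul_nonneg (Real.sqrt_nonneg _) hr₀.le)
    have h4 : Real.sqrt 2 * r₀ * (Real.sqrt Real.pi / 2) = B := by
      rw [hBdef, Real.sqrt_div Real.pi_pos.le 2]
      have hs2 : Real.sqrt 2 * Real.sqrt 2 = 2 := Real.mul_self_sqrt (by norm_num)
      have hs2pos : (0:ℝ) < Real.sqrt 2 := Real.sqrt_pos.mpr (by norm_num)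
      field_simp
      ring_nf
      nlinarith [Real.sqrt_nonneg Real.pi]
    linarith
  linarith
end

section
/- Let β ≥ 0 and let γ : ℝ × [0,T) → ℝ² be a smooth family of immersed closed plane curves satisfying the dissipative hyperbolic mean curvature flow ∂²γ/∂t² + β·∂γ/∂t = H·N⃗ - ⟨∂²γ/∂s∂t, ∂γ/∂t⟩·T⃗, where T⃗ = γ_s is the unit tangent, N⃗ its counterclockwise rotation by π/2, and s arclength. Define φ(u,t) = ⟨γ_t(u,t), γ_u(u,t)⟩. Then ∂φ/∂t = -β·φ for all (u,t). -/
open RealInnerProductSpace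

/-- For a smooth family of immersed closed plane curves solving
the dissipative hyperbolic mean curvature flow
γ_tt + β γ_t = H N⃗ - (1/|γ_u|²)⟨γ_ut, γ_t⟩ γ_u (the parametric form of
H N⃗ - ⟨γ_st, γ_t⟩ T⃗, with H N⃗ = (1/|γ_u|) ∂_u(γ_u/|γ_u|)), the tangential
component φ = ⟨γ_t, γ_u⟩ of the velocity satisfies ∂φ/∂t = -β φ. -/
theorem hmcf_curve_tangential_ode
    (T β : ℝ) (hT : 0 < T) (hβ : 0 ≤ β)
    (γ γt γu γtt γut HN : ℝ → ℝ → EuclideanSpace ℝ (Fin 2))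
    (himm : ∀ u, ∀ t ∈ Set.Ico (0:ℝ) T, γu u t ≠ 0)
    (hγt : ∀ u, ∀ t ∈ Set.Ico (0:ℝ) T, HasDerivAt (fun τ => γ u τ) (γt u t) t)
    (hγu : ∀ u, ∀ t ∈ Set.Ico (0:ℝ) T, HasDerivAt (fun v => γ v t) (γu u t) u)
    (hγtt : ∀ u, ∀ t ∈ Set.Ico (0:ℝ) T, HasDerivAt (fun τ => γt u τ) (γtt u t) t)
    (hγut : ∀ u, ∀ t ∈ Set.Ico (0:ℝ) T, HasDerivAt (fun τ => γu u τ) (γut u t) t)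
    -- H N⃗ = (1/|γ_u|) ∂_u (γ_u/|γ_u|), i.e. ∂_u (γ_u/|γ_u|) = |γ_u| • H N⃗ :
    (hHN : ∀ u, ∀ t ∈ Set.Ico (0:ℝ) T,
      HasDerivAt (fun v => ‖γu v t‖⁻¹ • γu v t) (‖γu u t‖ • HN u t) u)
    (hpde : ∀ u, ∀ t ∈ Set.Ico (0:ℝ) T,
      γtt u t + β • γt u t =
        HN u t - ((‖γu u t‖ ^ 2)⁻¹ * ⟪γut u t, γt u t⟫) • γu u t) :
    ∀ u, ∀ t ∈ Set.Ico (0:ℝ) T,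
      HasDerivAt (fun τ => ⟪γt u τ, γu u τ⟫) (-β * ⟪γt u t, γu u t⟫) t := by
  intro u t ht
  have hne : γu u t ≠ 0 := himm u t ht
  have hnorm : ‖γu u t‖ ≠ 0 := norm_ne_zero_iff.mpr hne
  -- orthogonality ⟪HN, γu⟫ = 0
  have horth : ⟪HN u t, γu u t⟫ = 0 := by
    have hT' := hHN u t ht
    have hTT : HasDerivAt (fun v => ⟪(‖γu v t‖⁻¹ • γu v t : EuclideanSpace ℝ (Fin 2)),
        ‖γu v t‖⁻¹ • γu v t⟫)
        (⟪‖γu u t‖⁻¹ • γu u t, ‖γu u t‖ • HN u t⟫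
          + ⟪‖γu u t‖ • HN u t, ‖γu u t‖⁻¹ • γu u t⟫) u := hT'.inner ℝ hT'
    have hconst : (fun v => ⟪(‖γu v t‖⁻¹ • γu v t : EuclideanSpace ℝ (Fin 2)),
        ‖γu v t‖⁻¹ • γu v t⟫) = fun _ => (1:ℝ) := by
      funext v
      have hv : ‖γu v t‖ ≠ 0 := norm_ne_zero_iff.mpr (himm v t ht)
      rw [real_inner_self_eq_norm_sq, norm_smul]
      simp [abs_of_nonneg (inv_nonneg.mpr (norm_nonneg _)), inv_mul_cancel₀ hv]
    rw [hconst] at hTT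
    have h0 : (⟪‖γu u t‖⁻¹ • γu u t, ‖γu u t‖ • HN u t⟫
          + ⟪‖γu u t‖ • HN u t, ‖γu u t‖⁻¹ • γu u t⟫ : ℝ) = 0 := by
      have := (hasDerivAt_const u (1:ℝ)).unique hTT
      linarith [this]
    rw [real_inner_smul_left, real_inner_smul_right, real_inner_smul_left,
        real_inner_smul_right, real_inner_comm (γu u t) (HN u t)] at h0
    have hc : ‖γu u t‖⁻¹ * ‖γu u t‖ = 1 := inv_mul_cancel₀ hnorm
    rw [← mul_assoc, ← mul_assoc, hc, mul_comm ‖γu u t‖ ‖γu u t‖⁻¹, hc] at h0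
    simp only [one_mul] at h0
    rw [real_inner_comm]
    linarith
  have key := (hγtt u t ht).inner ℝ (hγut u t ht)
  refine key.congr_deriv ?_
  have hpd := hpde u t ht
  have hγtt_eq : γtt u t = HN u t - ((‖γu u t‖ ^ 2)⁻¹ * ⟪γut u t, γt u t⟫) • γu u t
      - β • γt u t := by
    rw [← hpd]; abel
  have h1 : ⟪γtt u t, γu u t⟫ = -β * ⟪γt u t, γu u t⟫ - ⟪γut u t, γt u t⟫ := by
    rw [hγtt_eq]
    rw [inner_sub_left, inner_sub_left, real_inner_smul_left, real_inner_smul_left,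
        horth, real_inner_self_eq_norm_sq]
    field_simp
    ring
  rw [h1, real_inner_comm (γt u t) (γut u t)]
  ring
end

section
/- Let β ≥ 0 and let γ be a smooth solution of the dissipative hyperbolic mean curvature flow ∂²γ/∂t² + β·∂γ/∂t = H·N⃗ - ⟨∂²γ/∂s∂t, ∂γ/∂t⟩·T⃗ for closed plane curves. If the initial velocity is normal, i.e. ⟨γ_t(u,0), γ_u(u,0)⟩ = 0 for all u, then ⟨γ_t(u,t), γ_u(u,t)⟩ = 0 for all u and all t ∈ [0,T); that is, the flow remains normal. -/
open RealInnerProductSpace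

/-- For a smooth family of immersed closed plane curves solving
the dissipative hyperbolic mean curvature flow
γ_tt + β γ_t = H N⃗ - (1/|γ_u|²)⟨γ_ut, γ_t⟩ γ_u (the parametric form of
H N⃗ - ⟨γ_st, γ_t⟩ T⃗, with H N⃗ = (1/|γ_u|) ∂_u(γ_u/|γ_u|)), if the initial velocity is normal (⟨γ_t(u,0), γ_u(u,0)⟩ = 0), then the flow
remains normal: ⟨γ_t(u,t), γ_u(u,t)⟩ = 0 for all u and t ∈ [0,T). -/
theorem hmcf_curve_normality_preserved
    (T β : ℝ) (hT : 0 < T) (hβ : 0 ≤ β)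
    (γ γt γu γtt γut HN : ℝ → ℝ → EuclideanSpace ℝ (Fin 2))
    (himm : ∀ u, ∀ t ∈ Set.Ico (0:ℝ) T, γu u t ≠ 0)
    (hγt : ∀ u, ∀ t ∈ Set.Ico (0:ℝ) T, HasDerivAt (fun τ => γ u τ) (γt u t) t)
    (hγu : ∀ u, ∀ t ∈ Set.Ico (0:ℝ) T, HasDerivAt (fun v => γ v t) (γu u t) u)
    (hγtt : ∀ u, ∀ t ∈ Set.Ico (0:ℝ) T, HasDerivAt (fun τ => γt u τ) (γtt u t) t)
    (hγut : ∀ u, ∀ t ∈ Set.Ico (0:ℝ) T, HasDerivAt (fun τ => γu u τ) (γut u t) t)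
    -- H N⃗ = (1/|γ_u|) ∂_u (γ_u/|γ_u|), i.e. ∂_u (γ_u/|γ_u|) = |γ_u| • H N⃗ :
    (hHN : ∀ u, ∀ t ∈ Set.Ico (0:ℝ) T,
      HasDerivAt (fun v => ‖γu v t‖⁻¹ • γu v t) (‖γu u t‖ • HN u t) u)
    (hpde : ∀ u, ∀ t ∈ Set.Ico (0:ℝ) T,
      γtt u t + β • γt u t =
        HN u t - ((‖γu u t‖ ^ 2)⁻¹ * ⟪γut u t, γt u t⟫) • γu u t)
    (hinit : ∀ u, ⟪γt u 0, γu u 0⟫ = 0) :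
    ∀ u, ∀ t ∈ Set.Ico (0:ℝ) T, ⟪γt u t, γu u t⟫ = 0 := by

  intro u t ht
  -- φ τ = ⟪γt u τ, γu u τ⟫ satisfies φ' = -β φ on [0,T)
  set φ : ℝ → ℝ := fun τ => ⟪γt u τ, γu u τ⟫ with hφdef
  have hφderiv : ∀ τ ∈ Set.Ico (0:ℝ) T, HasDerivAt φ (-β * φ τ) τ := by
    intro τ hτ
    have hd : HasDerivAt φ (⟪γt u τ, γut u τ⟫ + ⟪γtt u τ, γu u τ⟫) τ :=
      (hγtt u τ hτ).inner ℝ (hγut u τ hτ)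
    -- orthogonality ⟪HN, γu⟫ = 0
    have hnorm : ‖γu u τ‖ ≠ 0 := norm_ne_zero_iff.mpr (himm u τ hτ)
    have hunit : ∀ v, ⟪(‖γu v τ‖⁻¹ • γu v τ), (‖γu v τ‖⁻¹ • γu v τ)⟫ = (1:ℝ) := by
      intro v
      have hv : ‖γu v τ‖ ≠ 0 := norm_ne_zero_iff.mpr (himm v τ hτ)
      rw [real_inner_smul_left, real_inner_smul_right, real_inner_self_eq_norm_sq]
      field_simp
    have hconst : HasDerivAt (fun v => ⟪(‖γu v τ‖⁻¹ • γu v τ), (‖γu v τ‖⁻¹ • γu v τ)⟫)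
        (0:ℝ) u := by
      have : (fun v => ⟪(‖γu v τ‖⁻¹ • γu v τ), (‖γu v τ‖⁻¹ • γu v τ)⟫) = fun _ => (1:ℝ) := by
        funext v; exact hunit v
      rw [this]; exact hasDerivAt_const u 1
    have hder2 : HasDerivAt (fun v => ⟪(‖γu v τ‖⁻¹ • γu v τ), (‖γu v τ‖⁻¹ • γu v τ)⟫)
        (⟪(‖γu u τ‖⁻¹ • γu u τ), (‖γu u τ‖ • HN u τ)⟫ +
          ⟪(‖γu u τ‖ • HN u τ), (‖γu u τ‖⁻¹ • γu u τ)⟫) u :=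
      (hHN u τ hτ).inner ℝ (hHN u τ hτ)
    have horth0 : ⟪(‖γu u τ‖⁻¹ • γu u τ), (‖γu u τ‖ • HN u τ)⟫ +
          ⟪(‖γu u τ‖ • HN u τ), (‖γu u τ‖⁻¹ • γu u τ)⟫ = 0 := hder2.unique hconst
    have horth : ⟪HN u τ, γu u τ⟫ = 0 := by
      simp only [real_inner_smul_left, real_inner_smul_right] at horth0
      rw [real_inner_comm (γu u τ)] at horth0
      rw [real_inner_comm]
      have hm : ‖γu u τ‖⁻¹ * ‖γu u τ‖ = 1 := inv_mul_cancel₀ hnorm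
      linear_combination (1/2 : ℝ) * horth0 - ⟪γu u τ, HN u τ⟫ * hm
    -- use the PDE
    have hpde' : γtt u τ = HN u τ - ((‖γu u τ‖ ^ 2)⁻¹ * ⟪γut u τ, γt u τ⟫) • γu u τ
        - β • γt u τ := by
      have := hpde u τ hτ
      linear_combination (norm := module) this
    have hkey : ⟪γt u τ, γut u τ⟫ + ⟪γtt u τ, γu u τ⟫ = -β * φ τ := by
      rw [hpde']
      rw [inner_sub_left, inner_sub_left, real_inner_smul_left, real_inner_smul_left,
        real_inner_self_eq_norm_sq, horth]
      have : (‖γu u τ‖ ^ 2)⁻¹ * ⟪γut u τ, γt u τ⟫ * ‖γu u τ‖ ^ 2 = ⟪γut u τ, γt u τ⟫ := by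
        field_simp
      rw [this, real_inner_comm (γt u τ) (γut u τ)]
      simp only [hφdef]
      ring
    rwa [hkey] at hd
  -- e^{βτ} φ τ is constant on [0, t]
  have hsub : Set.Icc (0:ℝ) t ⊆ Set.Ico (0:ℝ) T := fun x hx =>
    ⟨hx.1, lt_of_le_of_lt hx.2 ht.2⟩
  set g : ℝ → ℝ := fun τ => Real.exp (β * τ) * φ τ with hgdef
  have hgderiv : ∀ x ∈ Set.Ico (0:ℝ) t, HasDerivWithinAt g 0 (Set.Ici x) x := by
    intro x hx
    have hx' : x ∈ Set.Ico (0:ℝ) T := hsub ⟨hx.1, hx.2.le⟩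
    have h1 : HasDerivAt (fun τ => Real.exp (β * τ)) (β * Real.exp (β * x)) x := by
      have := (Real.hasDerivAt_exp (β * x)).comp x ((hasDerivAt_id x).const_mul β)
      simpa [mul_comm, Function.comp_def] using this
    have : HasDerivAt g (β * Real.exp (β * x) * φ x +
        Real.exp (β * x) * (-β * φ x)) x := h1.mul (hφderiv x hx')
    have h0 : β * Real.exp (β * x) * φ x + Real.exp (β * x) * (-β * φ x) = 0 := by ring
    rw [h0] at this
    exact this.hasDerivWithinAt
  have hgcont : ContinuousOn g (Set.Icc (0:ℝ) t) := by
    intro x hx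
    exact (((Real.continuous_exp.comp (continuous_const.mul continuous_id)).continuousAt).mul
      (hφderiv x (hsub hx)).continuousAt).continuousWithinAt
  have := constant_of_has_deriv_right_zero hgcont hgderiv t (Set.right_mem_Icc.mpr ht.1)
  have hg0 : g 0 = 0 := by
    simp only [hgdef, hφdef]
    rw [hinit u, mul_zero]
  rw [hg0] at this
  have hexp : Real.exp (β * t) ≠ 0 := Real.exp_ne_zero _
  have : Real.exp (β * t) * φ t = 0 := this
  exact (mul_eq_zero.mp this).resolve_left hexp
end

section
/- Let β ≥ 0 and let X : M × [0,T) → ℝ³ be a smooth solution of the dissipative hyperbolic mean curvature flow for surfaces ∂²X/∂t² + β·∂X/∂t = H·N⃗ - (1/2)∇_{S(t)}(|X_t|²). Define φ_i(p,t) = X_t(p,t) · ∂X/∂u_i(p,t) for i = 1,2. Then ∂φ_i/∂t = -β·φ_i; consequently, if X_t(·,0) is normal to the initial surface, then X_t(·,t) is normal to S(t) for all t ∈ [0,T). -/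
open RealInnerProductSpace

/-- Proposition 2.2: For a smooth solution of the dissipative
hyperbolic mean curvature flow for surfaces
X_tt + β X_t = H N⃗ - (1/2)∇_{S(t)}(|X_t|²), the tangential components
φ_i = X_t · ∂X/∂u_i satisfy ∂φ_i/∂t = -β φ_i; consequently, if the initial
velocity is normal, the velocity stays normal for all t ∈ [0,T). -/
theorem hmcf_surface_normality_preserved
    (T β : ℝ) (hT : 0 < T) (hβ : 0 ≤ β)
    (X Xt Xtt HN gradE : (Fin 2 → ℝ) → ℝ → EuclideanSpace ℝ (Fin 3))
    (Xu Xut : Fin 2 → (Fin 2 → ℝ) → ℝ → EuclideanSpace ℝ (Fin 3))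
    (g ginv : (Fin 2 → ℝ) → ℝ → Matrix (Fin 2) (Fin 2) ℝ)
    (hXt : ∀ p, ∀ t ∈ Set.Ico (0:ℝ) T, HasDerivAt (fun τ => X p τ) (Xt p t) t)
    (hXtt : ∀ p, ∀ t ∈ Set.Ico (0:ℝ) T, HasDerivAt (fun τ => Xt p τ) (Xtt p t) t)
    (hXu : ∀ i p, ∀ t ∈ Set.Ico (0:ℝ) T,
      HasDerivAt (fun s => X (Function.update p i s) t) (Xu i p t) (p i))
    -- mixed partial, as ∂/∂t of ∂X/∂u_i and as ∂/∂u_i of X_t :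
    (hXut : ∀ i p, ∀ t ∈ Set.Ico (0:ℝ) T,
      HasDerivAt (fun τ => Xu i p τ) (Xut i p t) t)
    (hXtu : ∀ i p, ∀ t ∈ Set.Ico (0:ℝ) T,
      HasDerivAt (fun s => Xt (Function.update p i s) t) (Xut i p t) (p i))
    (hg : ∀ p, ∀ t ∈ Set.Ico (0:ℝ) T, ∀ k l, g p t k l = ⟪Xu k p t, Xu l p t⟫)
    (hginv : ∀ p, ∀ t ∈ Set.Ico (0:ℝ) T,
      g p t * ginv p t = 1 ∧ ginv p t * g p t = 1)
    -- the mean curvature vector H N⃗ is normal to the surface :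
    (hHNnormal : ∀ i p, ∀ t ∈ Set.Ico (0:ℝ) T, ⟪HN p t, Xu i p t⟫ = 0)
    -- tangential gradient of the kinetic energy |X_t|² :
    (hgradE : ∀ p, ∀ t ∈ Set.Ico (0:ℝ) T,
      gradE p t = ∑ k, ∑ l,
        (ginv p t k l *
          deriv (fun s => ‖Xt (Function.update p k s) t‖ ^ 2) (p k)) • Xu l p t)
    (hpde : ∀ p, ∀ t ∈ Set.Ico (0:ℝ) T,
      Xtt p t + β • Xt p t = HN p t - (1 / 2 : ℝ) • gradE p t) :
    (∀ i p, ∀ t ∈ Set.Ico (0:ℝ) T,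
      HasDerivAt (fun τ => ⟪Xt p τ, Xu i p τ⟫) (-β * ⟪Xt p t, Xu i p t⟫) t) ∧
    ((∀ i p, ⟪Xt p 0, Xu i p 0⟫ = 0) →
      ∀ i p, ∀ t ∈ Set.Ico (0:ℝ) T, ⟪Xt p t, Xu i p t⟫ = 0) := by
  have key : ∀ i p, ∀ t ∈ Set.Ico (0:ℝ) T,
      HasDerivAt (fun τ => ⟪Xt p τ, Xu i p τ⟫) (-β * ⟪Xt p t, Xu i p t⟫) t := by
    intro i p t ht
    have hd : HasDerivAt (fun τ => ⟪Xt p τ, Xu i p τ⟫)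
        (⟪Xt p t, Xut i p t⟫ + ⟪Xtt p t, Xu i p t⟫) t :=
      (hXtt p t ht).inner ℝ (hXut i p t ht)
    -- the spatial derivative of the kinetic energy
    have hD : ∀ k, deriv (fun s => ‖Xt (Function.update p k s) t‖ ^ 2) (p k)
        = 2 * ⟪Xt p t, Xut k p t⟫ := by
      intro k
      have h1 : HasDerivAt (fun s => ‖Xt (Function.update p k s) t‖ ^ 2)
          (⟪Xt (Function.update p k (p k)) t, Xut k p t⟫
            + ⟪Xut k p t, Xt (Function.update p k (p k)) t⟫) (p k) := by
        have := (hXtu k p t ht).inner ℝ (hXtu k p t ht)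
        refine HasDerivAt.congr_deriv (this.congr_of_eventuallyEq ?_) rfl
        filter_upwards with s
        rw [real_inner_self_eq_norm_sq]
      rw [h1.deriv, Function.update_eq_self, real_inner_comm]
      ring
    -- inner product of gradE with Xu i
    have hgrad : ⟪gradE p t, Xu i p t⟫
        = deriv (fun s => ‖Xt (Function.update p i s) t‖ ^ 2) (p i) := by
      rw [hgradE p t ht]
      rw [sum_inner]
      have : ∀ k, ⟪∑ l, (ginv p t k l *
            deriv (fun s => ‖Xt (Function.update p k s) t‖ ^ 2) (p k)) • Xu l p t,
            Xu i p t⟫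
          = (ginv p t * g p t) k i
              * deriv (fun s => ‖Xt (Function.update p k s) t‖ ^ 2) (p k) := by
        intro k
        rw [sum_inner, Matrix.mul_apply, Finset.sum_mul]
        refine Finset.sum_congr rfl fun l _ => ?_
        rw [real_inner_smul_left, hg p t ht l i]
        ring
      simp only [this, (hginv p t ht).2, Matrix.one_apply]
      rw [Finset.sum_eq_single i]
      · simp
      · intro k _ hk; simp [hk]
      · simp
    -- take inner product of the PDE with Xu i
    have hinner : ⟪Xtt p t, Xu i p t⟫ + β * ⟪Xt p t, Xu i p t⟫
        = - (1/2 : ℝ) * ⟪gradE p t, Xu i p t⟫ := by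
      have := congrArg (fun v => ⟪v, Xu i p t⟫) (hpde p t ht)
      simp only [inner_add_left, inner_sub_left, real_inner_smul_left,
        hHNnormal i p t ht] at this
      linarith
    have hval : ⟪Xt p t, Xut i p t⟫ + ⟪Xtt p t, Xu i p t⟫
        = -β * ⟪Xt p t, Xu i p t⟫ := by
      have h2 := hD i
      rw [hgrad, h2] at hinner
      linarith
    rw [← hval]
    exact hd
  refine ⟨key, ?_⟩
  intro h0 i p t ht
  rcases eq_or_lt_of_le ht.1 with h | h
  · rw [← h]; exact h0 i p
  -- use the function ψ τ = exp(β τ) * φ τ which has zero derivative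
  set φ : ℝ → ℝ := fun τ => ⟪Xt p τ, Xu i p τ⟫ with hφ
  set ψ : ℝ → ℝ := fun τ => Real.exp (β * τ) * φ τ with hψ
  have hderiv : ∀ x ∈ Set.Ico (0:ℝ) T, HasDerivAt ψ 0 x := by
    intro x hx
    have he : HasDerivAt (fun τ => Real.exp (β * τ)) (Real.exp (β * x) * β) x := by
      simpa [mul_comm] using ((hasDerivAt_id x).const_mul β).exp
    have := he.mul (key i p x hx)
    exact this.congr_deriv (by ring)
  have hsub : Set.Icc (0:ℝ) t ⊆ Set.Ico (0:ℝ) T := fun x hx =>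
    ⟨hx.1, lt_of_le_of_lt hx.2 ht.2⟩
  have hcont : ContinuousOn ψ (Set.Icc 0 t) := fun x hx =>
    ((hderiv x (hsub hx)).continuousAt).continuousWithinAt
  have hzero := constant_of_has_deriv_right_zero hcont
    (fun x hx => ((hderiv x (hsub ⟨hx.1, le_of_lt hx.2⟩)).hasDerivWithinAt))
    t (Set.right_mem_Icc.mpr (le_of_lt h))
  have h00 : ψ 0 = 0 := by simp only [hψ, hφ, h0 i p, mul_zero]
  rw [h00] at hzero
  have : Real.exp (β * t) ≠ 0 := (Real.exp_pos _).ne'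
  have := mul_eq_zero.mp hzero
  tauto
end
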